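/- arXiv:math/0509270 — 3 statements merged into one kernel-verified Lean document; each statement's English description precedes it below -/
import Mathlib

section
/- Let T ⊆ ℝ be closed and unbounded above, with inf T = a > −∞. Suppose ξ is a càdlàg T-valued martingale with ξ_0 = x, (ξ_t² − t) a martingale, and ξ does not skip points (property I'). Then for b ∈ T with x < b and T_b = inf{t : ξ_t ∉ [a,b]}, one has E[t ∧ T_b] ≤ a² ∨ b² − x², T_b < ∞ a.s., ξ_{T_b} = b a.s., and the bounded martingale (ξ_{t∧T_b}) yields the contradiction b = x. Hence no such process exists when T is bounded below. -/
/-!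
Fix `b > x` and `c > b` in `T`. Let `σ` be the first point of the dyadic grid of mesh `2⁻ᵏ` in
`[0, n]` at which `ξ` exceeds `b`, and `σ = n` if there is none. Optional sampling for `ξ` gives
`E ξ_σ = x`; as `ξ_σ > b` unless `σ = n` and `ξ ≥ a`, this forces `P(σ = n) ≥ (b - x) / (b - a)`,
hence `E σ ≥ n (b - x) / (b - a)`. Optional sampling for `ξ² - t` gives `E σ = E ξ_σ² - x²` and
`∫_A ξ_σ² ≤ ∫_A ξ_n²` on events `A` known at time `σ`. As `k → ∞` the grid times decrease to a
time at which, by right-continuity and skip-freeness, `ξ` lies in `[a, c]`, so this domination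
bounds `E ξ_σ²` by a constant independent of `n` for some `k`. Letting `n → ∞` is absurd.
-/

open MeasureTheory

open scoped NNReal

/-- Property (I'): the path `f` does not skip over points of `T`. -/
def SkipFree (T : Set ℝ) (f : ℝ≥0 → ℝ) : Prop :=
  ∀ x y z : ℝ, x ∈ T → y ∈ T → z ∈ T → x < y → y < z →
    ∀ r t : ℝ≥0, r < t →
      ((f r = x ∧ f t = z) ∨ (f r = z ∧ f t = x)) →
        ∃ s : ℝ≥0, r ≤ s ∧ s ≤ t ∧ f s = y

open Filter Topology

namespace MeasureTheory

variable {Ω ι κ : Type*} {m0 : MeasurableSpace Ω} {μ : Measure Ω}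

def Filtration.precomp [Preorder ι] [Preorder κ] (ℱ : Filtration κ m0) {φ : ι → κ}
    (hφ : Monotone φ) : Filtration ι m0 :=
  ⟨fun i => ℱ (φ i), fun _ _ hij => ℱ.mono (hφ hij), fun i => ℱ.le (φ i)⟩

theorem Martingale.precomp [Preorder ι] [Preorder κ] {E : Type*} [NormedAddCommGroup E]
    [NormedSpace ℝ E] [CompleteSpace E] {ℱ : Filtration κ m0} {f : κ → Ω → E}
    (hf : Martingale f ℱ μ) {φ : ι → κ} (hφ : Monotone φ) :
    Martingale (fun i => f (φ i)) (ℱ.precomp hφ) μ :=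
  ⟨fun i => hf.stronglyAdapted (φ i), fun _ _ hij => hf.condExp_ae_eq (hφ hij)⟩

theorem Martingale.setIntegral_stoppedValue_eq [IsFiniteMeasure μ] {𝒢 : Filtration ℕ m0}
    {f : ℕ → Ω → ℝ} {τ : Ω → ℕ∞} (hf : Martingale f 𝒢 μ) (hτ : IsStoppingTime 𝒢 τ) {N : ℕ}
    (hτN : ∀ ω, τ ω ≤ N) {A : Set Ω} (hA : MeasurableSet[hτ.measurableSpace] A) :
    ∫ ω in A, stoppedValue f τ ω ∂μ = ∫ ω in A, f N ω ∂μ := by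
  have hle := hτ.measurableSpace_le_of_le hτN
  calc ∫ ω in A, stoppedValue f τ ω ∂μ = ∫ ω in A, (μ[f N|hτ.measurableSpace]) ω ∂μ :=
        setIntegral_congr_ae (hle A hA)
          ((hf.stoppedValue_ae_eq_condExp_of_le_const hτ hτN).mono fun _ h _ => h)
    _ = ∫ ω in A, f N ω ∂μ := setIntegral_condExp hle (hf.integrable N) hA

theorem Martingale.integral_eq_integral_bot [IsFiniteMeasure μ] [Preorder ι] [OrderBot ι]
    {ℱ : Filtration ι m0} {f : ι → Ω → ℝ} (hf : Martingale f ℱ μ) (i : ι) :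
    ∫ ω, f i ω ∂μ = ∫ ω, f ⊥ ω ∂μ := by
  rw [← integral_condExp (ℱ.le ⊥)]
  exact integral_congr_ae (hf.condExp_ae_eq bot_le)

end MeasureTheory

section ProbabilityBounds

variable {Ω : Type*} {m0 : MeasurableSpace Ω} {μ : Measure Ω}

theorem div_le_measureReal_of_integral_le [IsProbabilityMeasure μ] {Y : Ω → ℝ} {S : Set Ω}
    {a b x : ℝ} (hS : MeasurableSet S) (hY : Integrable Y μ) (haY : ∀ ω ∈ S, a ≤ Y ω)
    (hbY : ∀ ω ∈ Sᶜ, b ≤ Y ω) (hYx : ∫ ω, Y ω ∂μ ≤ x) (hab : a < b) :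
    (b - x) / (b - a) ≤ μ.real S := by
  have hS' := setIntegral_ge_of_const_le_real hS (measure_ne_top μ S) haY hY.integrableOn
  have hSc := setIntegral_ge_of_const_le_real hS.compl (measure_ne_top μ _) hbY hY.integrableOn
  rw [probReal_compl_eq_one_sub hS] at hSc
  rw [div_le_iff₀ (sub_pos.2 hab)]
  linarith [integral_add_compl hS hY]

theorem tendsto_setIntegral_of_ae_eventually_notMem {Z : Ω → ℝ} {A : ℕ → Set Ω}
    (hA : ∀ k, MeasurableSet (A k)) (hZ : Integrable Z μ)
    (hA_ev : ∀ᵐ ω ∂μ, ∀ᶠ k in atTop, ω ∉ A k) :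
    Tendsto (fun k => ∫ ω in A k, Z ω ∂μ) atTop (𝓝 0) := by
  simp_rw [← integral_indicator (hA _)]
  simpa using tendsto_integral_of_dominated_convergence (fun ω => ‖Z ω‖)
    (fun k => hZ.aestronglyMeasurable.indicator (hA k)) hZ.norm
    (fun k => ae_of_all _ fun ω => norm_indicator_le_norm_self _ _)
    (hA_ev.mono fun ω hω => tendsto_const_nhds.congr'
      (hω.mono fun k hk => (Set.indicator_of_notMem hk _).symm))

theorem exists_integral_le_of_setIntegral_le [IsProbabilityMeasure μ] {Y : ℕ → Ω → ℝ}
    {Z : Ω → ℝ} {A : ℕ → Set Ω} {C : ℝ} (hA : ∀ k, MeasurableSet (A k))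
    (hY : ∀ k, Integrable (Y k) μ) (hZ : Integrable Z μ)
    (hYZ : ∀ k, ∫ ω in A k, Y k ω ∂μ ≤ ∫ ω in A k, Z ω ∂μ)
    (hYC : ∀ k, ∀ ω ∈ (A k)ᶜ, Y k ω ≤ C) (hC : 0 ≤ C)
    (hA_ev : ∀ᵐ ω ∂μ, ∀ᶠ k in atTop, ω ∉ A k) :
    ∃ k, ∫ ω, Y k ω ∂μ ≤ C + 1 := by
  obtain ⟨k, hk⟩ := ((tendsto_setIntegral_of_ae_eventually_notMem hA hZ hA_ev).eventually_lt_const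
    one_pos).exists
  refine ⟨k, ?_⟩
  have hAc : ∫ ω in (A k)ᶜ, Y k ω ∂μ ≤ C :=
    calc ∫ ω in (A k)ᶜ, Y k ω ∂μ ≤ ∫ _ in (A k)ᶜ, C ∂μ :=
          setIntegral_mono_on (hY k).integrableOn (integrable_const C).integrableOn
            (hA k).compl (hYC k)
      _ = μ.real (A k)ᶜ * C := by rw [setIntegral_const, smul_eq_mul]
      _ ≤ C := mul_le_of_le_one_left hC measureReal_le_one
  linarith [integral_add_compl (hA k) (hY k), hYZ k]

end ProbabilityBounds

namespace GridHitting

noncomputable def dyadic (k j : ℕ) : ℝ≥0 := j / 2 ^ k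

theorem dyadic_mono (k : ℕ) : Monotone (dyadic k) := fun _ _ hij => by
  unfold dyadic
  gcongr

theorem dyadic_le_natCast_iff {k j n : ℕ} : dyadic k j ≤ n ↔ j ≤ n * 2 ^ k := by
  rw [dyadic, div_le_iff₀ (by positivity)]
  norm_cast

theorem dyadic_mul_two_pow (k n : ℕ) : dyadic k (n * 2 ^ k) = n := by
  rw [dyadic, div_eq_iff (by positivity)]
  push_cast
  ring

theorem dyadic_succ_two_mul (k j : ℕ) : dyadic (k + 1) (2 * j) = dyadic k j := by
  rw [dyadic, dyadic, div_eq_div_iff (by positivity) (by positivity)]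
  push_cast
  ring

theorem exists_dyadic_mem_Ico {s d : ℝ≥0} (hsd : s < d) : ∃ k j, dyadic k j ∈ Set.Ico s d := by
  obtain ⟨k, hk⟩ : ∃ k : ℕ, (2 : ℝ≥0)⁻¹ ^ k < d - s :=
    exists_pow_lt_of_lt_one (tsub_pos_of_lt hsd) (by norm_num)
  have h2k : (0 : ℝ≥0) < 2 ^ k := by positivity
  refine ⟨k, ⌈s * 2 ^ k⌉₊, ?_, ?_⟩
  · rw [dyadic, le_div_iff₀ h2k]
    exact Nat.le_ceil _
  · calc dyadic k ⌈s * 2 ^ k⌉₊ < (s * 2 ^ k + 1) / 2 ^ k :=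
          div_lt_div_of_pos_right (Nat.ceil_lt_add_one (by positivity)) h2k
      _ = s + 2⁻¹ ^ k := by rw [add_div, mul_div_cancel_right₀ _ h2k.ne', inv_pow, one_div]
      _ < s + (d - s) := by gcongr
      _ = d := add_tsub_cancel_of_le hsd.le

variable {Ω : Type*} {ξ : ℝ≥0 → Ω → ℝ} {b : ℝ} {n k : ℕ} {ω : Ω}

/-- The index of the first point `j / 2^k ≤ n` of the dyadic grid at which `ξ` exceeds `b`,
and `n * 2^k` if there is none. -/
noncomputable def gridHit (ξ : ℝ≥0 → Ω → ℝ) (b : ℝ) (n k : ℕ) (ω : Ω) : ℕ :=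
  hittingBtwn (fun j => ξ (dyadic k j)) (Set.Ioi b) 0 (n * 2 ^ k) ω

noncomputable def gridHitTime (ξ : ℝ≥0 → Ω → ℝ) (b : ℝ) (n k : ℕ) (ω : Ω) : ℝ≥0 :=
  dyadic k (gridHit ξ b n k ω)

theorem gridHit_le : gridHit ξ b n k ω ≤ n * 2 ^ k :=
  hittingBtwn_le ω

theorem gridHitTime_le : gridHitTime ξ b n k ω ≤ n :=
  dyadic_le_natCast_iff.2 gridHit_le

theorem gridHitTime_le_of_lt {j : ℕ} (hj : j ≤ n * 2 ^ k) (hb : b < ξ (dyadic k j) ω) :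
    gridHitTime ξ b n k ω ≤ dyadic k j :=
  dyadic_mono k (hittingBtwn_le_of_mem (Nat.zero_le j) hj hb)

theorem gridHit_eq_or_lt_apply :
    gridHit ξ b n k ω = n * 2 ^ k ∨ b < ξ (gridHitTime ξ b n k ω) ω :=
  gridHit_le.eq_or_lt.imp_right hittingBtwn_mem_set_of_hittingBtwn_lt

theorem gridHitTime_succ_le : gridHitTime ξ b n (k + 1) ω ≤ gridHitTime ξ b n k ω := by
  rcases gridHit_eq_or_lt_apply (ξ := ξ) (b := b) (n := n) (k := k) (ω := ω) with h | h
  · calc gridHitTime ξ b n (k + 1) ω ≤ n := gridHitTime_le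
      _ = gridHitTime ξ b n k ω := by rw [gridHitTime, h, dyadic_mul_two_pow]
  · have hle := gridHit_le (ξ := ξ) (b := b) (n := n) (k := k) (ω := ω)
    calc gridHitTime ξ b n (k + 1) ω ≤ dyadic (k + 1) (2 * gridHit ξ b n k ω) :=
          gridHitTime_le_of_lt (by rw [pow_succ, ← mul_assoc, mul_comm _ 2]; omega)
            (by rwa [dyadic_succ_two_mul])
      _ = gridHitTime ξ b n k ω := dyadic_succ_two_mul _ _

theorem gridHitTime_antitone : Antitone (fun k => gridHitTime ξ b n k ω) :=
  antitone_nat_of_succ_le fun _ => gridHitTime_succ_le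

theorem stoppedValue_gridHit {E : Type*} (f : ℝ≥0 → Ω → E) :
    stoppedValue (fun j => f (dyadic k j)) (fun ω => (gridHit ξ b n k ω : ℕ∞)) =
      fun ω => f (gridHitTime ξ b n k ω) ω :=
  rfl

theorem tendsto_apply_iInf_gridHitTime
    (hrc : ∀ t, ContinuousWithinAt (fun s => ξ s ω) (Set.Ici t) t) :
    Tendsto (fun k => ξ (gridHitTime ξ b n k ω) ω) atTop
      (𝓝 (ξ (⨅ k, gridHitTime ξ b n k ω) ω)) :=
  (hrc _).tendsto.comp <| tendsto_nhdsWithin_of_tendsto_nhds_of_eventually_within _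
    (tendsto_atTop_ciInf gridHitTime_antitone (OrderBot.bddBelow _))
    (Eventually.of_forall fun k => Set.mem_Ici.2 (ciInf_le (OrderBot.bddBelow _) k))

section OptionalSampling

variable {m0 : MeasurableSpace Ω} {μ : Measure Ω} {ℱ : Filtration ℝ≥0 m0}

theorem isStoppingTime_gridHit (hξ : Adapted ℱ ξ) :
    IsStoppingTime (ℱ.precomp (dyadic_mono k)) (fun ω => (gridHit ξ b n k ω : ℕ∞)) :=
  Adapted.isStoppingTime_hittingBtwn (fun j => hξ (dyadic k j)) measurableSet_Ioi

theorem integrable_apply_gridHitTime {f : ℝ≥0 → Ω → ℝ} (hf : ∀ t, Integrable (f t) μ)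
    (hξ : Adapted ℱ ξ) : Integrable (fun ω => f (gridHitTime ξ b n k ω) ω) μ :=
  integrable_stoppedValue ℕ (isStoppingTime_gridHit hξ) (fun j => hf (dyadic k j))
    (N := n * 2 ^ k) fun _ => WithTop.coe_le_coe.2 gridHit_le

theorem measurable_apply_gridHitTime (hξ : Adapted ℱ ξ) :
    Measurable[(isStoppingTime_gridHit (b := b) (n := n) (k := k) hξ).measurableSpace]
      (fun ω => ξ (gridHitTime ξ b n k ω) ω) :=
  measurable_stoppedValue (u := fun j => ξ (dyadic k j))
    (StronglyAdapted.isStronglyProgressive_of_discrete fun j => hξ.stronglyAdapted (dyadic k j))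
    (isStoppingTime_gridHit hξ)

variable [IsFiniteMeasure μ]

theorem setIntegral_apply_gridHitTime {f : ℝ≥0 → Ω → ℝ} (hf : Martingale f ℱ μ)
    (hξ : Adapted ℱ ξ) {A : Set Ω}
    (hA : MeasurableSet[(isStoppingTime_gridHit (b := b) (n := n) (k := k) hξ).measurableSpace] A) :
    ∫ ω in A, f (gridHitTime ξ b n k ω) ω ∂μ = ∫ ω in A, f n ω ∂μ := by
  rw [← dyadic_mul_two_pow k n, ← stoppedValue_gridHit]
  exact (hf.precomp (dyadic_mono k)).setIntegral_stoppedValue_eq (isStoppingTime_gridHit hξ)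
    (fun _ => WithTop.coe_le_coe.2 gridHit_le) hA

theorem integral_apply_gridHitTime {f : ℝ≥0 → Ω → ℝ} (hf : Martingale f ℱ μ)
    (hξ : Adapted ℱ ξ) : ∫ ω, f (gridHitTime ξ b n k ω) ω ∂μ = ∫ ω, f 0 ω ∂μ := by
  simpa only [setIntegral_univ, hf.integral_eq_integral_bot n, bot_eq_zero] using
    setIntegral_apply_gridHitTime (b := b) (n := n) (k := k) hf hξ MeasurableSet.univ

theorem integrable_gridHitTime (hξ : Adapted ℱ ξ) :
    Integrable (fun ω => (gridHitTime ξ b n k ω : ℝ)) μ :=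
  integrable_apply_gridHitTime (f := fun t _ => (t : ℝ)) (fun _ => integrable_const _) hξ

theorem integrable_sq_of_martingale_sq_sub
    (hsq : Martingale (fun (t : ℝ≥0) ω => ξ t ω ^ 2 - (t : ℝ)) ℱ μ) (t : ℝ≥0) :
    Integrable (fun ω => ξ t ω ^ 2) μ :=
  ((hsq.integrable t).add (integrable_const (t : ℝ))).congr (ae_of_all _ fun ω => by simp)

theorem setIntegral_sq_apply_gridHitTime_le
    (hsq : Martingale (fun (t : ℝ≥0) ω => ξ t ω ^ 2 - (t : ℝ)) ℱ μ) (hξ : Adapted ℱ ξ)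
    {A : Set Ω}
    (hA : MeasurableSet[(isStoppingTime_gridHit (b := b) (n := n) (k := k) hξ).measurableSpace] A) :
    ∫ ω in A, ξ (gridHitTime ξ b n k ω) ω ^ 2 ∂μ ≤ ∫ ω in A, ξ n ω ^ 2 ∂μ := by
  have hA' : MeasurableSet A := (isStoppingTime_gridHit hξ).measurableSpace_le _ hA
  have hsqint := integrable_sq_of_martingale_sq_sub hsq
  have hσ := integrable_gridHitTime (μ := μ) (b := b) (n := n) (k := k) hξ
  have heq := setIntegral_apply_gridHitTime hsq hξ hA
  rw [integral_sub (integrable_apply_gridHitTime hsqint hξ).integrableOn hσ.integrableOn,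
    integral_sub (hsqint n).integrableOn (integrable_const _).integrableOn] at heq
  have hle : ∫ ω in A, (gridHitTime ξ b n k ω : ℝ) ∂μ ≤ ∫ _ in A, (n : ℝ) ∂μ :=
    setIntegral_mono_on hσ.integrableOn (integrable_const _).integrableOn hA' fun ω _ =>
      mod_cast gridHitTime_le
  push_cast at heq
  linarith

end OptionalSampling

end GridHitting

open GridHitting

theorem SkipFree.apply_iInf_gridHitTime_le {Ω : Type*} {T : Set ℝ} {ξ : ℝ≥0 → Ω → ℝ} {ω : Ω}
    {x b c : ℝ} {n : ℕ} (hskip : SkipFree T (fun t => ξ t ω))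
    (hrc : ∀ t, ContinuousWithinAt (fun s => ξ s ω) (Set.Ici t) t) (hval : ∀ t, ξ t ω ∈ T)
    (hx : x ∈ T) (h0 : ξ 0 ω = x) (hc : c ∈ T) (hxb : x < b) (hbc : b < c) :
    ξ (⨅ k, gridHitTime ξ b n k ω) ω ≤ c := by
  set τ := ⨅ k, gridHitTime ξ b n k ω
  by_contra! hcτ
  -- The path crosses `c` at some `s < τ` and stays above `b` right after `s`,
  -- so some dyadic grid time before `τ` already sees a value above `b`.
  have hτ : 0 < τ := pos_iff_ne_zero.2 fun h => by
    rw [h, h0] at hcτ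
    linarith
  obtain ⟨s, -, hsτ, hs⟩ := hskip x c (ξ τ ω) hx hc (hval τ) (hxb.trans hbc) hcτ 0 τ hτ
    (Or.inl ⟨h0, rfl⟩)
  have hsτ : s < τ := hsτ.lt_of_ne fun h => by
    simp only [h] at hs
    linarith
  obtain ⟨u, hsu, hu⟩ := mem_nhdsGE_iff_exists_Ico_subset.1 <|
    hrc s (Ioi_mem_nhds (show b < ξ s ω by simpa only [hs] using hbc))
  obtain ⟨k, j, hsj, hju⟩ := exists_dyadic_mem_Ico (lt_min hsu hsτ)
  have hτn : τ ≤ n := (ciInf_le (OrderBot.bddBelow _) 0).trans gridHitTime_le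
  have hjn : j ≤ n * 2 ^ k :=
    dyadic_le_natCast_iff.1 ((hju.trans_le (min_le_right _ _)).le.trans hτn)
  have hhit := gridHitTime_le_of_lt hjn (hu ⟨hsj, hju.trans_le (min_le_left _ _)⟩)
  exact (((ciInf_le (OrderBot.bddBelow _) k).trans hhit).trans_lt
    (hju.trans_le (min_le_right _ _))).false

section GridHitTimeBounds

variable {Ω : Type*} {m0 : MeasurableSpace Ω} {μ : Measure Ω} [IsProbabilityMeasure μ]
  {ℱ : Filtration ℝ≥0 m0} {ξ : ℝ≥0 → Ω → ℝ} {a b x : ℝ}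

theorem natCast_mul_div_le_integral_gridHitTime (hξ : Martingale ξ ℱ μ) (h0 : ∀ ω, ξ 0 ω = x)
    (ha : ∀ t ω, a ≤ ξ t ω) (hab : a < b) (n k : ℕ) :
    n * ((b - x) / (b - a)) ≤ ∫ ω, (gridHitTime ξ b n k ω : ℝ) ∂μ := by
  have hadp := hξ.stronglyAdapted.adapted
  set S := {ω | gridHit ξ b n k ω = n * 2 ^ k}
  have hS : MeasurableSet S := (ℱ.precomp (dyadic_mono k)).le _ _ <| by
    convert (isStoppingTime_gridHit (b := b) (n := n) (k := k) hadp).measurableSet_eq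
      (n * 2 ^ k) using 1
    exact Set.ext fun _ => ENat.natCast_inj.symm
  have hσS : ∀ ω ∈ S, gridHitTime ξ b n k ω = n := fun ω hω => by
    rw [gridHitTime, show gridHit ξ b n k ω = n * 2 ^ k from hω, dyadic_mul_two_pow]
  have hprob : (b - x) / (b - a) ≤ μ.real S := by
    refine div_le_measureReal_of_integral_le hS
      (integrable_apply_gridHitTime hξ.integrable hadp) (fun ω _ => ha _ ω)
      (fun ω hω => (gridHit_eq_or_lt_apply.resolve_left hω).le) ?_ hab
    rw [integral_apply_gridHitTime hξ hadp]
    simp [h0]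
  have hσ := integrable_gridHitTime (μ := μ) (b := b) (n := n) (k := k) hadp
  calc (n : ℝ) * ((b - x) / (b - a)) ≤ n * μ.real S := by gcongr
    _ = ∫ ω in S, (gridHitTime ξ b n k ω : ℝ) ∂μ := by
        rw [setIntegral_congr_fun hS fun ω hω => congrArg _ (hσS ω hω), setIntegral_const,
          smul_eq_mul, mul_comm]
        simp
    _ ≤ ∫ ω, (gridHitTime ξ b n k ω : ℝ) ∂μ :=
        setIntegral_le_integral hσ (ae_of_all _ fun ω => NNReal.coe_nonneg _)

theorem exists_integral_gridHitTime_le {T : Set ℝ} {c : ℝ} (n : ℕ)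
    (hsq : Martingale (fun (t : ℝ≥0) ω => ξ t ω ^ 2 - (t : ℝ)) ℱ μ) (hadp : Adapted ℱ ξ)
    (hval : ∀ t ω, ξ t ω ∈ T) (ha : ∀ t ω, a ≤ ξ t ω)
    (hrc : ∀ ω, ∀ t, ContinuousWithinAt (fun s => ξ s ω) (Set.Ici t) t)
    (hx : x ∈ T) (h0 : ∀ ω, ξ 0 ω = x) (hskip : ∀ᵐ ω ∂μ, SkipFree T (fun t => ξ t ω))
    (hc : c ∈ T) (hxb : x < b) (hbc : b < c) :
    ∃ k, ∫ ω, (gridHitTime ξ b n k ω : ℝ) ∂μ ≤ max |a| |c + 1| ^ 2 + 1 - x ^ 2 := by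
  set A : ℕ → Set Ω := fun k => {ω | c + 1 ≤ ξ (gridHitTime ξ b n k ω) ω}
  have hA : ∀ k, MeasurableSet[(isStoppingTime_gridHit hadp).measurableSpace] (A k) := fun k =>
    measurable_apply_gridHitTime hadp measurableSet_Ici
  have hsqint := integrable_sq_of_martingale_sq_sub hsq
  have hA_ev : ∀ᵐ ω ∂μ, ∀ᶠ k in atTop, ω ∉ A k := hskip.mono fun ω hω => by
    have hcap := hω.apply_iInf_gridHitTime_le (n := n) (hrc ω) (fun t => hval t ω) hx (h0 ω) hc
      hxb hbc
    exact ((tendsto_apply_iInf_gridHitTime (hrc ω)).eventually_lt_const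
      (hcap.trans_lt (lt_add_one c))).mono fun k hk => not_le.2 hk
  have hA_bound : ∀ k, ∀ ω ∈ (A k)ᶜ, ξ (gridHitTime ξ b n k ω) ω ^ 2 ≤ max |a| |c + 1| ^ 2 :=
    fun k ω hω => by
      rw [← sq_abs]
      have hlt : ξ (gridHitTime ξ b n k ω) ω < c + 1 := not_le.1 hω
      exact pow_le_pow_left₀ (abs_nonneg _) (abs_le_max_abs_abs (ha _ ω) hlt.le) 2
  obtain ⟨k, hk⟩ := exists_integral_le_of_setIntegral_le
    (fun k => (isStoppingTime_gridHit hadp).measurableSpace_le _ (hA k))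
    (fun k => integrable_apply_gridHitTime hsqint hadp) (hsqint n)
    (fun k => setIntegral_sq_apply_gridHitTime_le hsq hadp (hA k)) hA_bound (sq_nonneg _) hA_ev
  have hσ := integrable_gridHitTime (μ := μ) (b := b) (n := n) (k := k) hadp
  have hmart := integral_apply_gridHitTime (b := b) (n := n) (k := k) hsq hadp
  rw [integral_sub (integrable_apply_gridHitTime hsqint hadp) hσ] at hmart
  simp only [h0, NNReal.coe_zero, sub_zero, integral_const, probReal_univ, smul_eq_mul,
    one_mul] at hmart
  exact ⟨k, by linarith⟩

end GridHitTimeBounds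

theorem no_lower_bounded_state_space_general {Ω : Type*} {m0 : MeasurableSpace Ω} (μ : Measure Ω)
    [IsProbabilityMeasure μ] (T : Set ℝ)
    (hub : ∀ M : ℝ, ∃ y ∈ T, M < y) (a : ℝ) (ha : IsGLB T a)
    (ℱ : Filtration ℝ≥0 m0) (ξ : ℝ≥0 → Ω → ℝ)
    (hval : ∀ t ω, ξ t ω ∈ T)
    (hrc : ∀ ω, ∀ t : ℝ≥0, ContinuousWithinAt (fun s => ξ s ω) (Set.Ici t) t)
    (x : ℝ) (hx : x ∈ T) (h0 : ∀ ω, ξ 0 ω = x)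
    (hskip : ∀ᵐ ω ∂μ, SkipFree T (fun t => ξ t ω))
    (hmartII : Martingale ξ ℱ μ)
    (hmartIII : Martingale (fun (t : ℝ≥0) ω => (ξ t ω) ^ 2 - (t : ℝ)) ℱ μ) :
    False := by
  obtain ⟨b, -, hxb⟩ := hub x
  obtain ⟨c, hc, hbc⟩ := hub b
  have haξ : ∀ t ω, a ≤ ξ t ω := fun t ω => ha.1 (hval t ω)
  have hab : a < b := (ha.1 hx).trans_lt hxb
  set K := max |a| |c + 1| ^ 2 + 1 - x ^ 2
  set q := (b - x) / (b - a)
  have hq : 0 < q := div_pos (sub_pos.2 hxb) (sub_pos.2 hab)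
  obtain ⟨n, hn⟩ := exists_nat_gt (K / q)
  obtain ⟨k, hk⟩ := exists_integral_gridHitTime_le n hmartIII hmartII.stronglyAdapted.adapted hval
    haξ hrc hx h0 hskip hc hxb hbc
  have hlow := natCast_mul_div_le_integral_gridHitTime (μ := μ) hmartII h0 haξ hab n k
  rw [div_lt_iff₀ hq] at hn
  linarith

/-- there is no Brownian motion on a closed set `T ⊆ ℝ` that is unbounded
above but bounded below: if `inf T = a > -∞`, there is no càdlàg `T`-valued process `ξ`
with `ξ_0 = x ∈ T` satisfying (I') (skip-free paths), (II) (`ξ` is a martingale) and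
(III) (`ξ_t² - t` is a martingale). (In the paper's argument, for `b ∈ T` with `x < b`
and `T_b = inf{t : ξ_t ∉ [a,b]}` one has `E[t ∧ T_b] ≤ a² ∨ b² - x²`, `T_b < ∞` a.s.,
`ξ_{T_b} = b` a.s., and the bounded martingale `ξ_{·∧T_b}` yields the contradiction
`b = x`.) -/
theorem no_lower_bounded_state_space {Ω : Type*} {m0 : MeasurableSpace Ω} (μ : Measure Ω)
    [IsProbabilityMeasure μ] (T : Set ℝ) (hclosed : IsClosed T)
    (hub : ∀ M : ℝ, ∃ y ∈ T, M < y) (a : ℝ) (ha : IsGLB T a)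
    (ℱ : Filtration ℝ≥0 m0) (ξ : ℝ≥0 → Ω → ℝ)
    (hval : ∀ t ω, ξ t ω ∈ T)
    (hrc : ∀ ω, ∀ t : ℝ≥0, ContinuousWithinAt (fun s => ξ s ω) (Set.Ici t) t)
    (x : ℝ) (hx : x ∈ T) (h0 : ∀ ω, ξ 0 ω = x)
    (hskip : ∀ᵐ ω ∂μ, SkipFree T (fun t => ξ t ω))
    (hmartII : Martingale ξ ℱ μ)
    (hmartIII : Martingale (fun (t : ℝ≥0) ω => (ξ t ω) ^ 2 - (t : ℝ)) ℱ μ) :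
    False :=
  no_lower_bounded_state_space_general μ T hub a ha ℱ ξ hval hrc x hx h0 hskip hmartII hmartIII
end

section
/- Fix q > 1 and c_q = q^{−1}(q−1)²(1+q). Define m_k(t,x) for k ≥ 0 by the recursion m_0(t,x)=1, m_1(t,x)=x, and m_k(t,x) = x^k + (q^{1−k}/c_q)(1−q^k)(1−q^{k−1}) ∫_0^t m_{k−2}(s,x) ds. Then m_k(t,x) = Σ_{m=0, m≡k mod 2}^{k} c_q^{−(k−m)/2} ((q;q)_k/(q;q)_m) q^{(m²−k²)/4} t^{(k−m)/2} x^m / ((k−m)/2)!, where (q;q)_n = ∏_{j=1}^n (1 − q^j). -/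
/-!
By induction along `k ↦ k + 2`. Writing `k = j + 2e`, the summand of index `j` is a constant times
`t^e x^j / e!`, which integrates to the same constant times `t^(e+1) x^j / (e+1)!`; the prefactor of
the recursion turns the constant for `k` into the one for `k + 2`
(`(q;q)_{k+2} = (q;q)_k (1 - q^(k+1)) (1 - q^(k+2))` and `e(j+e) + (k+1) = (e+1)(j+e+1)`),
and the term `x^(k+2)` supplies the new summand `j = k + 2`.
-/

open Finset

noncomputable section

/-- `c_q`. -/
def brownianConst (q : ℝ) : ℝ := q⁻¹ * (q - 1) ^ 2 * (1 + q)

def qPochhammer (q : ℝ) (n : ℕ) : ℝ := ∏ i ∈ range n, (1 - q ^ (i + 1))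

def momentTerm (q : ℝ) (k j : ℕ) (t x : ℝ) : ℝ :=
  if (k - j) % 2 = 0 then
    brownianConst q ^ (-(((k : ℤ) - j) / 2)) * (qPochhammer q k / qPochhammer q j) *
      q ^ (((j : ℤ) ^ 2 - (k : ℤ) ^ 2) / 4) * t ^ ((k - j) / 2) / ((k - j) / 2).factorial * x ^ j
  else 0

def momentClosedForm (q : ℝ) (k : ℕ) (t x : ℝ) : ℝ :=
  ∑ j ∈ range (k + 1), momentTerm q k j t x

end

theorem qPochhammer_ne_zero {q : ℝ} (hq : 1 < q) (n : ℕ) : qPochhammer q n ≠ 0 :=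
  prod_ne_zero_iff.mpr fun i _ => sub_ne_zero.mpr (one_lt_pow₀ hq i.succ_ne_zero).ne

theorem qPochhammer_add_two (q : ℝ) (n : ℕ) :
    qPochhammer q (n + 2) = qPochhammer q n * (1 - q ^ (n + 1)) * (1 - q ^ (n + 2)) := by
  simp only [qPochhammer, prod_range_succ]

theorem integral_pow_div_factorial (e : ℕ) (t : ℝ) :
    ∫ s in (0 : ℝ)..t, s ^ e / e.factorial = t ^ (e + 1) / (e + 1).factorial := by
  rw [intervalIntegral.integral_div, integral_pow, Nat.factorial_succ]
  push_cast
  field_simp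
  ring

section momentTerm

variable (q : ℝ) (t x : ℝ)

theorem momentTerm_self {k : ℕ} (hk : qPochhammer q k ≠ 0) : momentTerm q k k t x = x ^ k := by
  simp [momentTerm, div_self hk]

theorem momentTerm_of_odd {k j : ℕ} (h : (k - j) % 2 ≠ 0) : momentTerm q k j t x = 0 :=
  if_neg h

theorem momentTerm_add_two_mul (j e : ℕ) :
    momentTerm q (j + 2 * e) j t x = (brownianConst q ^ e)⁻¹ *
      (qPochhammer q (j + 2 * e) / qPochhammer q j) * (q ^ (e * (j + e)))⁻¹ *
      (t ^ e / e.factorial) * x ^ j := by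
  have hk : j + 2 * e - j = 2 * e := by omega
  have hc : -((((j + 2 * e : ℕ) : ℤ) - j) / 2) = -(e : ℤ) := by push_cast; omega
  have hq : (((j : ℤ) ^ 2 - ((j + 2 * e : ℕ) : ℤ) ^ 2) / 4) = -((e * (j + e) : ℕ) : ℤ) := by
    push_cast
    rw [show (j : ℤ) ^ 2 - (j + 2 * e) ^ 2 = -(e * (j + e)) * 4 by ring]
    omega
  simp only [momentTerm, hk, hc, hq, zpow_neg, zpow_natCast, Nat.mul_mod_right, if_true,
    Nat.mul_div_cancel_left e two_pos]
  ring

theorem continuous_momentTerm (k j : ℕ) : Continuous fun t => momentTerm q k j t x := by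
  unfold momentTerm
  split_ifs <;> fun_prop


theorem momentTerm_add_two {n j : ℕ} (hj : j ≤ n) :
    q ^ (-(n : ℤ) - 1) / brownianConst q * (1 - q ^ (n + 2)) * (1 - q ^ (n + 1)) *
      ∫ s in (0 : ℝ)..t, momentTerm q n j s x = momentTerm q (n + 2) j t x := by
  obtain ⟨e, rfl⟩ | hodd : (∃ e, n = j + 2 * e) ∨ (n - j) % 2 ≠ 0 := by
    by_cases h : (n - j) % 2 = 0
    · exact .inl ⟨(n - j) / 2, by omega⟩
    · exact .inr h
  · have hexp : -((j + 2 * e : ℕ) : ℤ) - 1 = -((j + 2 * e + 1 : ℕ) : ℤ) := by push_cast; ring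
    simp only [momentTerm_add_two_mul, intervalIntegral.integral_mul_const,
      intervalIntegral.integral_const_mul, integral_pow_div_factorial, hexp, zpow_neg,
      zpow_natCast]
    rw [show j + 2 * e + 2 = j + 2 * (e + 1) by ring, momentTerm_add_two_mul,
      show j + 2 * (e + 1) = j + 2 * e + 2 by ring, qPochhammer_add_two,
      show (e + 1) * (j + (e + 1)) = (j + 2 * e + 1) + e * (j + e) by ring]
    simp only [pow_add, pow_succ, mul_inv]
    ring
  · simp only [momentTerm_of_odd q _ _ hodd, intervalIntegral.integral_zero, mul_zero]
    exact (momentTerm_of_odd q t x (by omega)).symm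

end momentTerm

theorem momentClosedForm_zero (q t x : ℝ) : momentClosedForm q 0 t x = 1 := by
  simp [momentClosedForm, momentTerm_self q t x (by simp [qPochhammer] : qPochhammer q 0 ≠ 0)]

theorem momentClosedForm_one {q : ℝ} (hq : 1 < q) (t x : ℝ) : momentClosedForm q 1 t x = x := by
  simp [momentClosedForm, sum_range_succ, momentTerm_of_odd, momentTerm_self q t x
    (qPochhammer_ne_zero hq 1)]

theorem momentClosedForm_add_two {q : ℝ} {n : ℕ} (hP : qPochhammer q (n + 2) ≠ 0) (t x : ℝ) :
    x ^ (n + 2) + q ^ (-(n : ℤ) - 1) / brownianConst q * (1 - q ^ (n + 2)) * (1 - q ^ (n + 1)) *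
      ∫ s in (0 : ℝ)..t, momentClosedForm q n s x = momentClosedForm q (n + 2) t x := by
  simp only [momentClosedForm]
  rw [intervalIntegral.integral_finsetSum
      fun j _ => (continuous_momentTerm q x n j).intervalIntegrable _ _, mul_sum,
    sum_range_succ _ (n + 2), sum_range_succ _ (n + 1), momentTerm_self q t x hP,
    momentTerm_of_odd q t x (by omega : (n + 2 - (n + 1)) % 2 ≠ 0), add_zero, add_comm,
    sum_congr rfl fun j hj => momentTerm_add_two q t x (Nat.lt_succ_iff.mp (mem_range.mp hj))]

/-- closed form for the moments of Brownian motion on `T_q`. If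
`m_0 = 1`, `m_1(t,x) = x` and
`m_k(t,x) = x^k + (q^{1-k}/c_q)(1-q^k)(1-q^{k-1}) ∫_0^t m_{k-2}(s,x) ds`
with `c_q = q⁻¹(q-1)²(1+q)`, then
`m_k(t,x) = Σ_{0≤j≤k, j≡k (2)} c_q^{-(k-j)/2} ((q;q)_k/(q;q)_j) q^{(j²-k²)/4}
t^{(k-j)/2} x^j / ((k-j)/2)!`. -/
theorem moments_closed_form (q : ℝ) (hq : 1 < q) (m : ℕ → ℝ → ℝ → ℝ)
    (h0 : ∀ t x, m 0 t x = 1) (h1 : ∀ t x, m 1 t x = x)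
    (hrec : ∀ k t x, m (k + 2) t x = x ^ (k + 2) +
      (q ^ (-(k : ℤ) - 1) / (q⁻¹ * (q - 1) ^ 2 * (1 + q))) * (1 - q ^ (k + 2)) *
        (1 - q ^ (k + 1)) * ∫ s in (0 : ℝ)..t, m k s x) :
    ∀ k t x, m k t x = ∑ j ∈ Finset.range (k + 1),
      if (k - j) % 2 = 0 then
        (q⁻¹ * (q - 1) ^ 2 * (1 + q)) ^ (-(((k : ℤ) - j) / 2)) *
          ((∏ i ∈ Finset.range k, (1 - q ^ (i + 1))) /
            (∏ i ∈ Finset.range j, (1 - q ^ (i + 1)))) *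
          q ^ (((j : ℤ) ^ 2 - (k : ℤ) ^ 2) / 4) *
          t ^ ((k - j) / 2) / (Nat.factorial ((k - j) / 2)) * x ^ j
      else 0 := by
  intro k
  induction k using Nat.twoStepInduction with
  | zero => exact fun t x => (h0 t x).trans (momentClosedForm_zero q t x).symm
  | one => exact fun t x => (h1 t x).trans (momentClosedForm_one hq t x).symm
  | more n ih _ =>
    intro t x
    simp only [hrec, ih]
    exact momentClosedForm_add_two (qPochhammer_ne_zero hq _) t x
end

section
/- For 0 < p < 1 and w, c with |w| < 1, |c| < 1: (w; p)_∞ · ₁φ₁(0; w; p; c) = (c; p)_∞ · ₁φ₁(0; c; p; w), where ₁φ₁(0; b; p; z) = Σ_{k≥0} ((−1)^k p^{k(k−1)/2} z^k)/((b;p)_k (p;p)_k). -/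
/-- The finite q-Pochhammer symbol `(z; p)_k`. -/
noncomputable def qPoch (z p : ℝ) (k : ℕ) : ℝ := ∏ j ∈ Finset.range k, (1 - z * p ^ j)

/-- The infinite q-Pochhammer symbol `(z; p)_∞`. -/
noncomputable def qPochInf (z p : ℝ) : ℝ := ∏' j : ℕ, (1 - z * p ^ j)

/-- The basic hypergeometric series
`₁φ₁(0; b; p; z) = Σ_{k≥0} (-1)^k p^{k(k-1)/2} z^k / ((b;p)_k (p;p)_k)`. -/
noncomputable def phi11 (b p z : ℝ) : ℝ :=
  ∑' k : ℕ, ((-1) ^ k * p ^ (k * (k - 1) / 2) * z ^ k) / (qPoch b p k * qPoch p p k)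

/-!
The series `E(z) = Σ_k (-1)^k p^{k(k-1)/2} z^k / (p; p)_k` satisfies `E(z) = (1 - z) E(pz)`, hence
`E(z) = (z; p)_n E(z pⁿ)`, and letting `n → ∞` gives Euler's identity `E(z) = (z; p)_∞`.
Therefore `(w; p)_∞ / (w; p)_k = E(w pᵏ)`, whose `j`-th term is `pʲᵏ` times the `j`-th term of
`E(w)`. So the left-hand side is the double series `Σ_{k,j} a_k(c) a_j(w) pᵏʲ`, where `a_k(z)` is
the `k`-th term of `E(z)`, and this series is symmetric in `c` and `w`.
-/

open Filter Topology

section QPochhammer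

variable {p z : ℝ}

@[simp]
theorem qPoch_zero (z p : ℝ) : qPoch z p 0 = 1 := Finset.prod_range_zero _

theorem qPoch_succ (z p : ℝ) (k : ℕ) : qPoch z p (k + 1) = qPoch z p k * (1 - z * p ^ k) :=
  Finset.prod_range_succ _ _

theorem abs_mul_pow_lt_one (hp : |p| ≤ 1) (hz : |z| < 1) (j : ℕ) : |z * p ^ j| < 1 := by
  rw [abs_mul, abs_pow]
  exact lt_of_le_of_lt (mul_le_of_le_one_right (abs_nonneg z) (pow_le_one₀ (abs_nonneg p) hp)) hz

theorem one_sub_mul_pow_pos (hp : |p| ≤ 1) (hz : |z| < 1) (j : ℕ) : 0 < 1 - z * p ^ j := by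
  linarith [(abs_lt.1 (abs_mul_pow_lt_one hp hz j)).2]

theorem qPoch_ne_zero (hp : |p| ≤ 1) (hz : |z| < 1) (k : ℕ) : qPoch z p k ≠ 0 :=
  (Finset.prod_pos fun j _ => one_sub_mul_pow_pos hp hz j).ne'

theorem summable_mul_pow (hp : |p| < 1) (z : ℝ) : Summable fun j : ℕ => z * p ^ j :=
  (summable_geometric_of_abs_lt_one hp).mul_left z

theorem tendsto_qPoch (hp : |p| < 1) (z : ℝ) :
    Tendsto (qPoch z p) atTop (𝓝 (qPochInf z p)) := by
  have : Multipliable fun j : ℕ => 1 + -(z * p ^ j) :=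
    Real.multipliable_one_add_of_summable (summable_mul_pow hp z).neg
  simp only [← sub_eq_add_neg] at this
  exact this.hasProd.tendsto_prod_nat

theorem qPochInf_pos (hp : |p| < 1) (hz : |z| < 1) : 0 < qPochInf z p := by
  have hlog : Summable fun j : ℕ => Real.log (1 + -(z * p ^ j)) :=
    Real.summable_log_one_add_of_summable (summable_mul_pow hp z).neg
  simp only [← sub_eq_add_neg] at hlog
  rw [qPochInf, ← Real.rexp_tsum_eq_tprod (one_sub_mul_pow_pos hp.le hz) hlog]
  exact Real.exp_pos _

end QPochhammer

noncomputable def qExpTerm (p z : ℝ) (k : ℕ) : ℝ :=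
  (-1) ^ k * p ^ (k * (k - 1) / 2) * z ^ k / qPoch p p k

noncomputable def qExp (p z : ℝ) : ℝ := ∑' k, qExpTerm p z k

section QExp

variable {p z : ℝ}

@[simp]
theorem qExpTerm_zero (p z : ℝ) : qExpTerm p z 0 = 1 := by simp [qExpTerm]

theorem qExpTerm_mul_pow (p z : ℝ) (n k : ℕ) :
    qExpTerm p (z * p ^ n) k = p ^ (n * k) * qExpTerm p z k := by
  simp only [qExpTerm, mul_pow, pow_mul']
  ring

theorem qExpTerm_succ_mul (hp : |p| < 1) (z : ℝ) (k : ℕ) :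
    qExpTerm p z (k + 1) * (1 - p ^ (k + 1)) = -(z * p ^ k) * qExpTerm p z k := by
  have hk := qPoch_ne_zero hp.le hp k
  have hk1 : 1 - p * p ^ k ≠ 0 := (one_sub_mul_pow_pos hp.le hp k).ne'
  simp only [qExpTerm, qPoch_succ, Nat.triangle_succ, pow_succ]
  field_simp
  ring

theorem summable_qExpTerm (hp : |p| < 1) (hz : |z| < 1) : Summable (qExpTerm p z) := by
  have hnum : (fun k : ℕ => (-1) ^ k * p ^ (k * (k - 1) / 2) * z ^ k) =O[atTop]
      fun k => |z| ^ k := by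
    refine Asymptotics.IsBigO.of_bound 1 (Eventually.of_forall fun k => ?_)
    simp only [norm_mul, norm_pow, norm_neg, norm_one, one_pow, one_mul, Real.norm_eq_abs,
      abs_abs]
    exact mul_le_of_le_one_left (by positivity) (pow_le_one₀ (abs_nonneg p) hp.le)
  have hden : (fun k => (qPoch p p k)⁻¹) =O[atTop] fun _ => (1 : ℝ) :=
    ((tendsto_qPoch hp p).inv₀ (qPochInf_pos hp hp).ne').isBigO_one ℝ
  refine summable_of_isBigO_nat ?_ ((hnum.mul hden).congr_left fun k => ?_)
  · simpa using summable_geometric_of_lt_one (abs_nonneg z) hz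
  · rw [qExpTerm, div_eq_mul_inv]

@[simp]
theorem qExp_zero (p : ℝ) : qExp p 0 = 1 := by
  rw [qExp, tsum_eq_single 0 fun k hk => by simp [qExpTerm, zero_pow hk], qExpTerm_zero]

theorem qExp_eq_one_sub_mul (hp : |p| < 1) (hz : |z| < 1) :
    qExp p z = (1 - z) * qExp p (z * p) := by
  have hzp : |z * p| < 1 := by simpa using abs_mul_pow_lt_one hp.le hz 1
  have hmul : ∀ k, qExpTerm p (z * p) k = p ^ k * qExpTerm p z k := by
    simpa using qExpTerm_mul_pow p z 1
  have hterm : ∀ k, qExpTerm p z (k + 1) - qExpTerm p (z * p) (k + 1) =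
      -z * qExpTerm p (z * p) k := fun k => by
    rw [hmul, hmul]
    linear_combination qExpTerm_succ_mul hp z k
  have hdiff : HasSum (fun k => qExpTerm p z k - qExpTerm p (z * p) k) (-z * qExp p (z * p)) := by
    rw [← hasSum_nat_add_iff' 1]
    simp only [hterm, Finset.sum_range_one, qExpTerm_zero, sub_self, sub_zero]
    exact (summable_qExpTerm hp hzp).hasSum.mul_left (-z)
  have hsub : HasSum (fun k => qExpTerm p z k - qExpTerm p (z * p) k)
      (qExp p z - qExp p (z * p)) :=
    (summable_qExpTerm hp hz).hasSum.sub (summable_qExpTerm hp hzp).hasSum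
  linear_combination hsub.unique hdiff

theorem qExp_eq_qPoch_mul (hp : |p| < 1) (hz : |z| < 1) (n : ℕ) :
    qExp p z = qPoch z p n * qExp p (z * p ^ n) := by
  induction n with
  | zero => simp
  | succ n ih =>
    rw [ih, qExp_eq_one_sub_mul hp (abs_mul_pow_lt_one hp.le hz n), qPoch_succ, pow_succ,
      mul_assoc z, mul_assoc]

theorem tendsto_qExp_mul_pow (hp : |p| < 1) (hz : |z| < 1) :
    Tendsto (fun n => qExp p (z * p ^ n)) atTop (𝓝 1) := by
  rw [← qExp_zero p]
  refine tendsto_tsum_of_dominated_convergence (summable_qExpTerm hp hz).abs (fun k => ?_)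
    (Eventually.of_forall fun n k => ?_)
  · have hcont : Continuous fun u => qExpTerm p u k := by unfold qExpTerm; fun_prop
    refine (hcont.tendsto 0).comp ?_
    simpa using (tendsto_pow_atTop_nhds_zero_of_abs_lt_one hp).const_mul z
  · rw [qExpTerm_mul_pow, Real.norm_eq_abs, abs_mul, abs_pow]
    exact mul_le_of_le_one_left (abs_nonneg _) (pow_le_one₀ (abs_nonneg p) hp.le)

theorem qPochInf_eq_qExp (hp : |p| < 1) (hz : |z| < 1) : qPochInf z p = qExp p z := by
  have h := (tendsto_qPoch hp z).mul (tendsto_qExp_mul_pow hp hz)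
  simp only [← qExp_eq_qPoch_mul hp hz, mul_one] at h
  exact tendsto_nhds_unique h tendsto_const_nhds

end QExp

section Symmetry

variable {p w c : ℝ}

theorem summable_qExpTerm_mul_qExpTerm_mul_pow (hp : |p| < 1) (hc : |c| < 1) (hw : |w| < 1) :
    Summable fun kj : ℕ × ℕ => qExpTerm p c kj.1 * qExpTerm p w kj.2 * p ^ (kj.1 * kj.2) := by
  refine .of_norm_bounded ((summable_qExpTerm hp hc).abs.mul_of_nonneg
    (summable_qExpTerm hp hw).abs (fun _ => abs_nonneg _) fun _ => abs_nonneg _) fun kj => ?_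
  rw [Real.norm_eq_abs, abs_mul, abs_mul, abs_pow]
  exact mul_le_of_le_one_right (by positivity) (pow_le_one₀ (abs_nonneg p) hp.le)

theorem qPochInf_mul_phi11 (hp : |p| < 1) (hw : |w| < 1) (hc : |c| < 1) :
    qPochInf w p * phi11 w p c =
      ∑' kj : ℕ × ℕ, qExpTerm p c kj.1 * qExpTerm p w kj.2 * p ^ (kj.1 * kj.2) := by
  have hsum := summable_qExpTerm_mul_qExpTerm_mul_pow hp hc hw
  rw [qPochInf_eq_qExp hp hw, phi11, ← tsum_mul_left, hsum.tsum_prod' hsum.prod_factor]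
  refine tsum_congr fun k => ?_
  have hwk := qPoch_ne_zero hp.le hw k
  rw [qExp_eq_qPoch_mul hp hw k, qExp, ← tsum_mul_left, ← tsum_mul_right]
  refine tsum_congr fun j => ?_
  rw [qExpTerm_mul_pow]
  simp only [qExpTerm]
  field_simp

end Symmetry

/-- for `0 < p < 1`, `|w| < 1`, `|c| < 1`,
`(w;p)_∞ ₁φ₁(0;w;p;c) = (c;p)_∞ ₁φ₁(0;c;p;w)`. -/
theorem phi11_symm (p w c : ℝ) (hp0 : 0 < p) (hp1 : p < 1) (hw : |w| < 1) (hc : |c| < 1) :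
    qPochInf w p * phi11 w p c = qPochInf c p * phi11 c p w := by
  have hp : |p| < 1 := abs_lt.2 ⟨by linarith, hp1⟩
  rw [qPochInf_mul_phi11 hp hw hc, qPochInf_mul_phi11 hp hc hw,
    ← (Equiv.prodComm ℕ ℕ).tsum_eq]
  refine tsum_congr fun ⟨k, j⟩ => ?_
  simp only [Equiv.prodComm_apply, Prod.swap_prod_mk]
  ring
end
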